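/- arXiv:1803.04931 — 2 statements merged into one kernel-verified Lean document; each statement's English description precedes it below -/
import Mathlib

section
/- Let 2 ≤ t ≤ k ≤ v and let ℬ be a partial t-(v,k,1) design on X = {1,…,v}, i.e., a family of k-element subsets of X such that every t-element subset of X is contained in at most one member of ℬ. Assume ℬ is non-empty and not equal to the family of all k-subsets of X. Then γ2(ℬ) ≤ t. -/
noncomputable section

variable {σ : Type*}

/-- Characteristic 0-1 vector `c_B` of a finite set `B` of points. -/
def charVec [DecidableEq σ] (B : Finset σ) : σ → ℂ := fun i => if i ∈ B then 1 else 0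

/-- `I(ℬ)`: the ideal of all polynomials vanishing at the characteristic vector of
every block of `ℬ`. -/
def designIdeal [DecidableEq σ] (ℬ : Finset (Finset σ)) : Ideal (MvPolynomial σ ℂ) :=
  ⨅ B ∈ ℬ, RingHom.ker (MvPolynomial.eval (charVec B))

/-- The generating set `G₀ = {x₁ + ⋯ + x_v - k} ∪ {xᵢ² - xᵢ}`. -/
def G0 (σ : Type*) [Fintype σ] (k : ℕ) : Set (MvPolynomial σ ℂ) :=
  insert ((∑ i, MvPolynomial.X i) - MvPolynomial.C (k : ℂ))
    (Set.range fun i : σ => MvPolynomial.X i ^ 2 - MvPolynomial.X i)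

/-- The trivial ideal `T = ⟨G₀⟩`. -/
def trivialIdeal (σ : Type*) [Fintype σ] (k : ℕ) : Ideal (MvPolynomial σ ℂ) :=
  Ideal.span (G0 σ k)

/-- `γ₁`: minimum total degree of a non-trivial polynomial in the ideal of the design. -/
def gamma1 [Fintype σ] [DecidableEq σ] (k : ℕ) (ℬ : Finset (Finset σ)) : ℕ :=
  sInf {d : ℕ | ∃ f ∈ designIdeal ℬ, f ∉ trivialIdeal σ k ∧ f.totalDegree = d}

/-- `γ₂`: least `s` such that `I(ℬ)` is generated by polynomials of total degree `≤ s`. -/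
def gamma2 [Fintype σ] [DecidableEq σ] (ℬ : Finset (Finset σ)) : ℕ :=
  sInf {s : ℕ | ∃ G : Set (MvPolynomial σ ℂ),
    (∀ g ∈ G, g.totalDegree ≤ s) ∧ Ideal.span G = designIdeal ℬ}

/-- `ℬ` is a `t`-`(v,k,lam)` design: all blocks have size `k` and every `t`-element
subset of the point set lies in exactly `lam` blocks. -/
def IsDesign [DecidableEq σ] (ℬ : Finset (Finset σ)) (k t lam : ℕ) : Prop :=
  (∀ B ∈ ℬ, B.card = k) ∧
  ∀ T : Finset σ, T.card = t → (ℬ.filter fun B => T ⊆ B).card = lam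

/-! ### Auxiliary machinery -/

open MvPolynomial

section Aux

variable [Fintype σ] [DecidableEq σ]

/-- The ideal generated by the `xᵢ² - xᵢ`. -/
def Jcube (σ : Type*) [Fintype σ] : Ideal (MvPolynomial σ ℂ) :=
  Ideal.span (Set.range fun i : σ => X i ^ 2 - X i)

/-- indicator polynomial of a subset -/
def eP (A : Finset σ) : MvPolynomial σ ℂ :=
  (∏ i ∈ A, X i) * ∏ i ∈ Aᶜ, ((1 : MvPolynomial σ ℂ) - X i)

lemma mem_designIdeal_iff (ℬ : Finset (Finset σ)) (f : MvPolynomial σ ℂ) :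
    f ∈ designIdeal ℬ ↔ ∀ B ∈ ℬ, eval (charVec B) f = 0 := by
  simp [designIdeal, Ideal.mem_iInf, RingHom.mem_ker]

lemma eval_mono (T B : Finset σ) :
    eval (charVec B) (∏ i ∈ T, X i) = if T ⊆ B then 1 else 0 := by
  rw [map_prod]
  by_cases h : T ⊆ B
  · rw [if_pos h, Finset.prod_eq_one (fun i hi => by simp [charVec, h hi])]
  · obtain ⟨i, hiT, hiB⟩ := Finset.not_subset.1 h
    rw [if_neg h, Finset.prod_eq_zero hiT (by simp [charVec, hiB])]

lemma eval_eP (A B : Finset σ) :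
    eval (charVec B) (eP A) = if A = B then 1 else 0 := by
  rw [eP, map_mul, map_prod, map_prod]
  by_cases h : A = B
  · subst h
    rw [if_pos rfl, Finset.prod_eq_one (fun i hi => by simp [charVec, hi]),
        Finset.prod_eq_one (fun i hi => by simp [charVec, Finset.mem_compl.1 hi]), mul_one]
  · rw [if_neg h]
    have : ∃ i, (i ∈ A ∧ i ∉ B) ∨ (i ∉ A ∧ i ∈ B) := by
      by_contra hc
      push_neg at hc
      exact h (Finset.ext fun i => by have := hc i; tauto)
    obtain ⟨i, hi⟩ := this
    rcases hi with ⟨h1, h2⟩ | ⟨h1, h2⟩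
    · rw [Finset.prod_eq_zero h1 (by simp [charVec, h2]), zero_mul]
    · rw [Finset.prod_eq_zero (Finset.mem_compl.2 h1) (by simp [charVec, h2]), mul_zero]

lemma eP_mul_X (A : Finset σ) (i : σ) :
    eP A * X i - charVec A i • eP A ∈ Jcube σ := by
  have hmem : X i ^ 2 - X i ∈ Jcube σ := Ideal.subset_span ⟨i, rfl⟩
  by_cases h : i ∈ A
  · have he : eP A = X i * ((∏ j ∈ A.erase i, X j) *
        ∏ j ∈ Aᶜ, ((1 : MvPolynomial σ ℂ) - X j)) := by
      rw [eP, ← Finset.mul_prod_erase A X h, mul_assoc]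
    have hc : charVec A i = 1 := by simp [charVec, h]
    rw [he, hc, one_smul]
    have heq : X i * ((∏ j ∈ A.erase i, X j) * ∏ j ∈ Aᶜ, ((1 : MvPolynomial σ ℂ) - X j)) * X i -
        X i * ((∏ j ∈ A.erase i, X j) * ∏ j ∈ Aᶜ, ((1 : MvPolynomial σ ℂ) - X j)) =
        ((∏ j ∈ A.erase i, X j) * ∏ j ∈ Aᶜ, ((1 : MvPolynomial σ ℂ) - X j)) *
          (X i ^ 2 - X i) := by ring
    rw [heq]
    exact Ideal.mul_mem_left _ _ hmem
  · have hi' : i ∈ Aᶜ := Finset.mem_compl.2 h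
    have he : eP A = ((1 : MvPolynomial σ ℂ) - X i) * ((∏ j ∈ A, X j) *
        ∏ j ∈ Aᶜ.erase i, ((1 : MvPolynomial σ ℂ) - X j)) := by
      rw [eP, ← Finset.mul_prod_erase Aᶜ _ hi']; ring
    have hc : charVec A i = 0 := by simp [charVec, h]
    rw [he, hc, zero_smul, sub_zero]
    have heq : ((1 : MvPolynomial σ ℂ) - X i) * ((∏ j ∈ A, X j) *
        ∏ j ∈ Aᶜ.erase i, ((1 : MvPolynomial σ ℂ) - X j)) * X i =
        (-((∏ j ∈ A, X j) * ∏ j ∈ Aᶜ.erase i, ((1 : MvPolynomial σ ℂ) - X j))) *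
          (X i ^ 2 - X i) := by ring
    rw [heq]
    exact Ideal.mul_mem_left _ _ hmem

lemma eP_mul (A : Finset σ) (g : MvPolynomial σ ℂ) :
    eP A * g - eval (charVec A) g • eP A ∈ Jcube σ := by
  induction g using MvPolynomial.induction_on with
  | C a => simp [smul_smul, mul_comm, MvPolynomial.smul_eq_C_mul]
  | add f g hf hg =>
      have := Ideal.add_mem _ hf hg
      convert this using 1
      rw [map_add, add_smul]; ring
  | mul_X f i hf =>
      have h1 : eP A * (f * X i) - (eval (charVec A) f • eP A) * X i ∈ Jcube σ := by
        have := Ideal.mul_mem_right (X i) _ hf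
        convert this using 1; ring
      have h2 : (eval (charVec A) f • eP A) * X i -
          eval (charVec A) (f * X i) • eP A ∈ Jcube σ := by
        have := Ideal.mul_mem_left _ (C (eval (charVec A) f)) (eP_mul_X A i)
        convert this using 1
        rw [map_mul, eval_X, smul_eq_C_mul, smul_eq_C_mul, smul_eq_C_mul, map_mul]
        ring
      have := Ideal.add_mem _ h1 h2
      convert this using 1; ring

lemma sum_eP : ∑ A : Finset σ, eP A = (1 : MvPolynomial σ ℂ) := by
  have h := Finset.prod_add (fun i : σ => X i)
    (fun i : σ => (1 : MvPolynomial σ ℂ) - X i) Finset.univ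
  have h1 : ∏ i : σ, (X i + ((1 : MvPolynomial σ ℂ) - X i)) = (1 : MvPolynomial σ ℂ) := by
    simp
  rw [h1] at h
  rw [show (1 : MvPolynomial σ ℂ) = _ from h, Finset.powerset_univ]
  apply Finset.sum_congr rfl
  intro A _
  rw [eP, Finset.compl_eq_univ_sdiff]

lemma normal_form (f : MvPolynomial σ ℂ) :
    f - ∑ A : Finset σ, eval (charVec A) f • eP A ∈ Jcube σ := by
  induction f using MvPolynomial.induction_on with
  | C a =>
      have : ∑ A : Finset σ, eval (charVec A) (C a : MvPolynomial σ ℂ) • eP A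
          = C a := by
        simp only [eval_C]
        rw [← Finset.smul_sum, sum_eP, smul_eq_C_mul, mul_one]
      rw [this, sub_self]
      exact Ideal.zero_mem _
  | add f g hf hg =>
      have := Ideal.add_mem _ hf hg
      convert this using 1
      simp only [map_add, add_smul, Finset.sum_add_distrib]
      ring
  | mul_X f i hf =>
      have h1 : f * X i - (∑ A : Finset σ, eval (charVec A) f • eP A) * X i ∈ Jcube σ := by
        have := Ideal.mul_mem_right (X i) _ hf
        convert this using 1; ring
      have h2 : (∑ A : Finset σ, eval (charVec A) f • eP A) * X i -
          ∑ A : Finset σ, eval (charVec A) (f * X i) • eP A ∈ Jcube σ := by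
        rw [Finset.sum_mul, ← Finset.sum_sub_distrib]
        apply Ideal.sum_mem
        intro A _
        have := Ideal.mul_mem_left _ (C (eval (charVec A) f)) (eP_mul_X A i)
        convert this using 1
        rw [map_mul, eval_X, smul_eq_C_mul, smul_eq_C_mul, smul_eq_C_mul, map_mul]
        ring
      have := Ideal.add_mem _ h1 h2
      convert this using 1; ring

lemma totalDegree_sub_le (p q : MvPolynomial σ ℂ) :
    (p - q).totalDegree ≤ max p.totalDegree q.totalDegree := by
  rw [sub_eq_add_neg]
  exact (totalDegree_add _ _).trans (by rw [totalDegree_neg])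

lemma eval_charVec_sum (A : Finset σ) :
    ∑ i : σ, charVec A i = (A.card : ℂ) := by
  simp [charVec, Finset.sum_ite_mem]

end Aux


/-- for any non-empty, non-complete partial `t`-`(v,k,1)` design,
`γ₂(ℬ) ≤ t`. -/
theorem partial_steiner_gamma2 (v k t : ℕ) (ht : 2 ≤ t) (htk : t ≤ k) (hkv : k ≤ v)
    (ℬ : Finset (Finset (Fin v))) (hcard : ∀ B ∈ ℬ, B.card = k)
    (hpartial : ∀ T : Finset (Fin v), T.card = t → (ℬ.filter fun B => T ⊆ B).card ≤ 1)
    (hne : ℬ.Nonempty)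
    (hnc : ℬ ≠ Finset.powersetCard k (Finset.univ : Finset (Fin v))) :
    gamma2 ℬ ≤ t := by
  classical
  set G : Set (MvPolynomial (Fin v) ℂ) :=
    (G0 (Fin v) k ∪
    {p | ∃ T : Finset (Fin v), T.card = t ∧ (∀ B ∈ ℬ, ¬ T ⊆ B) ∧ p = ∏ i ∈ T, X i}) ∪
    {p | ∃ T T' B, B ∈ ℬ ∧ T.card = t ∧ T'.card = t ∧ T ⊆ B ∧ T' ⊆ B ∧
        p = (∏ i ∈ T, X i) - ∏ i ∈ T', X i} with hGdef
  -- the cube ideal lies in the span of G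
  have hJG : Jcube (Fin v) ≤ Ideal.span G :=
    Ideal.span_mono (fun p hp => Or.inl (Or.inl (Set.subset_insert _ _ hp)))
  -- uniqueness of blocks through a t-set
  have huniq : ∀ (T : Finset (Fin v)), T.card = t → ∀ B ∈ ℬ, ∀ B' ∈ ℬ,
      T ⊆ B → T ⊆ B' → B = B' := by
    intro T hT B hB B' hB' h1 h2
    exact Finset.card_le_one.1 (hpartial T hT) B (Finset.mem_filter.2 ⟨hB, h1⟩)
      B' (Finset.mem_filter.2 ⟨hB', h2⟩)
  -- every generator vanishes on every block
  have hGvanish : ∀ g ∈ G, ∀ B ∈ ℬ, eval (charVec B) g = 0 := by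
    rintro g ((hg | ⟨T, hTcard, hTun, rfl⟩) | ⟨T, T', B₀, hB₀, hT, hT', hTB, hT'B, rfl⟩) B hB
    · rcases hg with hg | ⟨i, rfl⟩
      · rw [hg]
        rw [map_sub, eval_C, map_sum]
        simp only [eval_X]
        rw [eval_charVec_sum, hcard B hB, sub_self]
      · rw [map_sub, map_pow, eval_X]
        by_cases h : i ∈ B <;> simp [charVec, h]
    · rw [eval_mono, if_neg (hTun B hB)]
    · rw [map_sub, eval_mono, eval_mono]
      have h1 : T ⊆ B ↔ B = B₀ := by
        constructor
        · intro h; exact huniq T hT B hB B₀ hB₀ h hTB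
        · rintro rfl; exact hTB
      have h2 : T' ⊆ B ↔ B = B₀ := by
        constructor
        · intro h; exact huniq T' hT' B hB B₀ hB₀ h hT'B
        · rintro rfl; exact hT'B
      rw [if_congr (h1.trans h2.symm) rfl rfl, sub_self]
  -- span G ≤ designIdeal
  have hle : Ideal.span G ≤ designIdeal ℬ := by
    rw [Ideal.span_le]
    intro g hg
    rw [SetLike.mem_coe, mem_designIdeal_iff]
    exact hGvanish g hg
  -- for every set not in ℬ, some generator does not vanish at it
  have hkey : ∀ A : Finset (Fin v), A ∉ ℬ → ∃ g ∈ G, eval (charVec A) g ≠ 0 := by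
    intro A hA
    by_cases hAc : A.card = k
    · by_cases hcov : ∃ T ⊆ A, T.card = t ∧ ∀ B ∈ ℬ, ¬ T ⊆ B
      · obtain ⟨T, hTA, hTcard, hTun⟩ := hcov
        refine ⟨∏ i ∈ T, X i, Or.inl (Or.inr ⟨T, hTcard, hTun, rfl⟩), ?_⟩
        rw [eval_mono, if_pos hTA]
        exact one_ne_zero
      · push_neg at hcov
        obtain ⟨T, hTA, hTcard⟩ := Finset.exists_subset_card_eq (htk.trans_eq hAc.symm)
        obtain ⟨B, hB, hTB⟩ := hcov T hTA hTcard
        have hBA : ¬ B ⊆ A := by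
          intro h
          exact hA (by rwa [Finset.eq_of_subset_of_card_le h
            (by rw [hcard B hB, hAc])] at hB)
        obtain ⟨j, hjB, hjA⟩ := Finset.not_subset.1 hBA
        have hTne : T.Nonempty := Finset.card_pos.1 (by omega)
        obtain ⟨i, hiT⟩ := hTne
        set T' : Finset (Fin v) := insert j (T.erase i) with hT'def
        have hjnotin : j ∉ T.erase i := fun h => hjA (hTA (Finset.erase_subset _ _ h))
        have hT'card : T'.card = t := by
          rw [hT'def, Finset.card_insert_of_notMem hjnotin,
            Finset.card_erase_of_mem hiT, hTcard]
          omega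
        have hT'B : T' ⊆ B := by
          rw [hT'def, Finset.insert_subset_iff]
          exact ⟨hjB, (Finset.erase_subset _ _).trans hTB⟩
        refine ⟨(∏ i ∈ T, X i) - ∏ i ∈ T', X i,
          Or.inr ⟨T, T', B, hB, hTcard, hT'card, hTB, hT'B, rfl⟩, ?_⟩
        have hT'A : ¬ T' ⊆ A := fun h => hjA (h (hT'def ▸ Finset.mem_insert_self j _))
        rw [map_sub, eval_mono, eval_mono, if_pos hTA, if_neg hT'A]
        simp
    · refine ⟨(∑ i, X i) - C (k : ℂ), Or.inl (Or.inl (Set.mem_insert _ _)), ?_⟩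
      rw [map_sub, eval_C, map_sum]
      simp only [eval_X]
      rw [eval_charVec_sum]
      exact fun h => hAc (Nat.cast_inj.1 (sub_eq_zero.1 h))
  -- eP of non-blocks lies in span G
  have hePmem : ∀ A : Finset (Fin v), A ∉ ℬ → eP A ∈ Ideal.span G := by
    intro A hA
    obtain ⟨g, hgG, hgne⟩ := hkey A hA
    have h1 : eP A * g ∈ Ideal.span G :=
      Ideal.mul_mem_left _ _ (Ideal.subset_span hgG)
    have h2 : eval (charVec A) g • eP A ∈ Ideal.span G := by
      have := Ideal.sub_mem _ h1 (hJG (eP_mul A g))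
      simpa using this
    have heq : eP A = (eval (charVec A) g)⁻¹ • (eval (charVec A) g • eP A) := by
      rw [smul_smul, inv_mul_cancel₀ hgne, one_smul]
    rw [heq, smul_eq_C_mul]
    exact Ideal.mul_mem_left _ _ h2
  -- designIdeal ≤ span G
  have hge : designIdeal ℬ ≤ Ideal.span G := by
    intro f hf
    have hNf := normal_form (σ := Fin v) f
    have hsum : ∑ A : Finset (Fin v), eval (charVec A) f • eP A ∈ Ideal.span G := by
      apply Ideal.sum_mem
      intro A _
      by_cases hA : A ∈ ℬ
      · rw [(mem_designIdeal_iff ℬ f).1 hf A hA, zero_smul]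
        exact Ideal.zero_mem _
      · rw [smul_eq_C_mul]
        exact Ideal.mul_mem_left _ _ (hePmem A hA)
    have := Ideal.add_mem _ (hJG hNf) hsum
    simpa using this
  -- degree bound
  have hdeg : ∀ g ∈ G, g.totalDegree ≤ t := by
    rintro g ((hg | ⟨T, hTcard, -, rfl⟩) | ⟨T, T', B₀, -, hT, hT', -, -, rfl⟩)
    · rcases hg with rfl | ⟨i, rfl⟩
      · refine (totalDegree_sub_le _ _).trans (max_le ?_ ?_)
        · refine ((totalDegree_finset_sum _ _).trans
            (Finset.sup_le fun i _ => by rw [totalDegree_X])).trans (by omega)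
        · rw [totalDegree_C]; omega
      · refine (totalDegree_sub_le _ _).trans (max_le ?_ ?_)
        · rw [totalDegree_X_pow]; omega
        · rw [totalDegree_X]; omega
    · refine (totalDegree_finset_prod _ _).trans ?_
      calc ∑ i ∈ T, (X i : MvPolynomial (Fin v) ℂ).totalDegree
          = ∑ i ∈ T, 1 := by simp [totalDegree_X]
        _ = T.card := by simp
        _ ≤ t := hTcard.le
    · refine (totalDegree_sub_le _ _).trans (max_le ?_ ?_) <;>
        refine (totalDegree_finset_prod _ _).trans ?_
      · calc ∑ i ∈ T, (X i : MvPolynomial (Fin v) ℂ).totalDegree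
            = T.card := by simp [totalDegree_X]
          _ ≤ t := hT.le
      · calc ∑ i ∈ T', (X i : MvPolynomial (Fin v) ℂ).totalDegree
            = T'.card := by simp [totalDegree_X]
          _ ≤ t := hT'.le
  apply Nat.sInf_le
  exact ⟨G, hdeg, le_antisymm hle hge⟩
end
end

section
/- Let λ ≥ 1, let ℬ be a t-(v,k,λ) design on X = {1,…,v} which is non-empty and not equal to the family of all k-subsets of X, and let 2 ≤ s ≤ k. Suppose |B ∩ B'| < s for every pair B, B' of distinct blocks of ℬ. Then γ2(ℬ) ≤ s. -/
noncomputable section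

variable {σ : Type*}

section Aux

open MvPolynomial Finset

set_option linter.unusedSectionVars false

variable [Fintype σ] [DecidableEq σ]

/-- Indicator polynomial of the point `charVec A` on the Boolean cube. -/
def chi (A : Finset σ) : MvPolynomial σ ℂ :=
  (∏ i ∈ A, X i) * ∏ i ∈ Aᶜ, (1 - X i)

lemma sum_chi : ∑ A : Finset σ, chi A = 1 := by
  have := Fintype.prod_add (fun i : σ => (X i : MvPolynomial σ ℂ)) (fun i => 1 - X i)
  simp only [add_sub_cancel, prod_const_one] at this
  exact this.symm

lemma boolMem (i : σ) (A : Finset σ) :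
    chi A * X i - (charVec A i) • chi A ∈
      Ideal.span (Set.range fun j : σ => (X j : MvPolynomial σ ℂ) ^ 2 - X j) := by
  by_cases h : i ∈ A
  · have hA : ∏ j ∈ A, (X j : MvPolynomial σ ℂ) = X i * ∏ j ∈ A.erase i, X j :=
      (Finset.mul_prod_erase A _ h).symm
    have heq : chi A * X i - (charVec A i) • chi A
        = ((∏ j ∈ A.erase i, X j) * ∏ j ∈ Aᶜ, (1 - X j)) * (X i ^ 2 - X i) := by
      simp only [chi, charVec, h, if_pos, smul_eq_C_mul, map_one, hA]
      ring
    rw [heq]; exact Ideal.mul_mem_left _ _ (Ideal.subset_span ⟨i, rfl⟩)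
  · have h' : i ∈ Aᶜ := by simpa using h
    have hA : ∏ j ∈ Aᶜ, (1 - X j : MvPolynomial σ ℂ)
        = (1 - X i) * ∏ j ∈ Aᶜ.erase i, (1 - X j) := (Finset.mul_prod_erase _ _ h').symm
    have heq : chi A * X i - (charVec A i) • chi A
        = ((∏ j ∈ A, X j) * ∏ j ∈ Aᶜ.erase i, (1 - X j)) * (-(X i ^ 2 - X i)) := by
      simp only [chi, charVec, h, if_neg, if_false, smul_eq_C_mul, map_zero, hA]
      ring
    rw [heq]
    exact Ideal.mul_mem_left _ _ (neg_mem (Ideal.subset_span ⟨i, rfl⟩))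

lemma chiMul (A : Finset σ) (f : MvPolynomial σ ℂ) :
    chi A * f - (eval (charVec A) f) • chi A ∈
      Ideal.span (Set.range fun j : σ => (X j : MvPolynomial σ ℂ) ^ 2 - X j) := by
  induction f using MvPolynomial.induction_on with
  | C a => simp [smul_eq_C_mul, mul_comm]
  | add p q hp hq =>
      have := Ideal.add_mem _ hp hq
      convert this using 1
      simp [smul_eq_C_mul]; ring
  | mul_X p i hp =>
      rw [eval_mul, eval_X]
      have h1 : chi A * (p * X i) - ((eval (charVec A) p) * charVec A i) • chi A
          = (chi A * p - (eval (charVec A) p) • chi A) * X i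
            + (eval (charVec A) p) • (chi A * X i - (charVec A i) • chi A) := by
        simp only [smul_eq_C_mul, map_mul]; ring
      rw [h1]
      exact Ideal.add_mem _ (Ideal.mul_mem_right _ _ hp)
        (by rw [smul_eq_C_mul]; exact Ideal.mul_mem_left _ _ (boolMem i A))

lemma eval_prod_X (B S : Finset σ) :
    eval (charVec B) (∏ i ∈ S, X i) = if S ⊆ B then 1 else 0 := by
  rw [map_prod]
  simp only [eval_X, charVec]
  rw [Finset.prod_boole]
  congr 1

lemma eval_chi (A B : Finset σ) :
    eval (charVec B) (chi A) = if A = B then 1 else 0 := by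
  have h0 : eval (charVec B) (chi A)
      = (∏ i ∈ A, if i ∈ B then (1:ℂ) else 0) * ∏ i ∈ Aᶜ, (1 - if i ∈ B then (1:ℂ) else 0) := by
    simp [chi, charVec]
  have h2 : ∀ i : σ, (1 - if i ∈ B then (1:ℂ) else 0) = if i ∉ B then 1 else 0 := by
    intro i; by_cases h : i ∈ B <;> simp [h]
  rw [h0]
  simp_rw [h2]
  rw [Finset.prod_boole, Finset.prod_boole]
  by_cases h : A = B
  · subst h; simp
  · rw [if_neg h]
    by_cases h1 : ∀ i ∈ A, i ∈ B
    · have h3 : ¬ ∀ i ∈ Aᶜ, i ∉ B := by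
        intro hall
        exact h (Finset.Subset.antisymm h1 (fun x hx => by_contra fun hxA =>
          hall x (Finset.mem_compl.2 hxA) hx))
      rw [if_neg h3, mul_zero]
    · simp [h1]

lemma separator {ℬ : Finset (Finset σ)} {k s : ℕ} (hsk : s ≤ k) (hs1 : 1 ≤ s)
    (hcard : ∀ B ∈ ℬ, B.card = k)
    (hint : ∀ B ∈ ℬ, ∀ B' ∈ ℬ, B ≠ B' → (B ∩ B').card < s)
    (A : Finset σ) (hA : A.card = k) (hAB : A ∉ ℬ) :
    ∃ p : MvPolynomial σ ℂ, p.totalDegree ≤ s ∧ (∀ B ∈ ℬ, eval (charVec B) p = 0) ∧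
      eval (charVec A) p ≠ 0 := by
  by_contra hcon
  push_neg at hcon
  set V := MvPolynomial.restrictTotalDegree σ ℂ s with hV
  let L : ℬ → (V →ₗ[ℂ] ℂ) := fun B =>
    (MvPolynomial.aeval (charVec B.1)).toLinearMap.comp V.subtype
  let K : V →ₗ[ℂ] ℂ := (MvPolynomial.aeval (charVec A)).toLinearMap.comp V.subtype
  have hLapp : ∀ (B : Finset σ) (p : V),
      ((MvPolynomial.aeval (charVec B)).toLinearMap.comp V.subtype) p
        = eval (charVec B) p.1 := fun B p => rfl
  have hker : ⨅ B : ℬ, LinearMap.ker (L B) ≤ LinearMap.ker K := by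
    intro p hp
    rw [LinearMap.mem_ker, hLapp]
    simp only [Submodule.mem_iInf, LinearMap.mem_ker] at hp
    refine hcon p.1 ((MvPolynomial.mem_restrictTotalDegree σ s p.1).1 p.2) ?_
    intro B hB
    exact hp ⟨B, hB⟩
  obtain ⟨μ, hμ⟩ := (Submodule.mem_span_range_iff_exists_fun ℂ).1 (mem_span_of_iInf_ker_le_ker hker)
  have key : ∀ S : Finset σ, S.card ≤ s →
      ∑ B : ℬ, μ B * (if S ⊆ B.1 then 1 else 0) = (if S ⊆ A then (1:ℂ) else 0) := by
    intro S hS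
    have hdeg : (∏ i ∈ S, X i : MvPolynomial σ ℂ).totalDegree ≤ s := by
      refine le_trans (MvPolynomial.totalDegree_finset_prod S _) (le_trans ?_ hS)
      simp [MvPolynomial.totalDegree_X]
    have hmem : (∏ i ∈ S, X i : MvPolynomial σ ℂ) ∈ V :=
      (MvPolynomial.mem_restrictTotalDegree σ s _).2 hdeg
    have := LinearMap.congr_fun hμ ⟨_, hmem⟩
    rw [LinearMap.sum_apply] at this
    simp only [LinearMap.smul_apply, smul_eq_mul] at this
    rw [hLapp] at this
    simp only [L, hLapp] at this
    rw [eval_prod_X] at this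
    simp_rw [eval_prod_X] at this
    exact this
  obtain ⟨T, hTA, hTcard⟩ := Finset.exists_subset_card_eq (s := A) (n := s)
    (by rw [hA]; exact hsk)
  have step1 : ∀ B : ℬ, T ⊆ B.1 → μ B = 0 := by
    intro B hTB
    have hBA : ¬ B.1 ⊆ A := by
      intro hsub
      have heq : B.1 = A := Finset.eq_of_subset_of_card_le hsub
        (by rw [hA, hcard B.1 B.2])
      exact hAB (heq ▸ B.2)
    obtain ⟨q, hqB, hqA⟩ := Finset.not_subset.1 hBA
    obtain ⟨t₀, ht₀⟩ := Finset.card_pos.1 (by rw [hTcard]; omega)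
    set S : Finset σ := insert q (T.erase t₀) with hSdef
    have hqT : q ∉ T.erase t₀ := fun hq => hqA (hTA (Finset.mem_of_mem_erase hq))
    have hScard : S.card = s := by
      rw [hSdef, Finset.card_insert_of_notMem hqT, Finset.card_erase_of_mem ht₀, hTcard]
      omega
    have hSB : S ⊆ B.1 := by
      rw [hSdef]
      exact Finset.insert_subset hqB ((Finset.erase_subset _ _).trans hTB)
    have hSA : ¬ S ⊆ A := fun hsub => hqA (hsub (Finset.mem_insert_self _ _))
    have hk := key S (le_of_eq hScard)
    rw [if_neg hSA] at hk
    have hsingle : ∑ B' : ℬ, μ B' * (if S ⊆ B'.1 then (1:ℂ) else 0) = μ B := by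
      rw [Fintype.sum_eq_single B]
      · rw [if_pos hSB, mul_one]
      · intro B' hne
        rw [if_neg, mul_zero]
        intro hSB'
        have hBB' : B.1 ≠ B'.1 := fun h => hne (Subtype.ext h.symm)
        have := hint B.1 B.2 B'.1 B'.2 hBB'
        have hsub : S ⊆ B.1 ∩ B'.1 := Finset.subset_inter hSB hSB'
        have := Finset.card_le_card hsub
        omega
    rw [hsingle] at hk
    exact hk
  have hk2 := key T (le_of_eq hTcard)
  rw [if_pos hTA] at hk2
  have hz : ∑ B : ℬ, μ B * (if T ⊆ B.1 then (1:ℂ) else 0) = 0 := by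
    refine Finset.sum_eq_zero fun B _ => ?_
    by_cases h : T ⊆ B.1
    · rw [step1 B h, zero_mul]
    · rw [if_neg h, mul_zero]
  rw [hz] at hk2
  exact one_ne_zero hk2.symm

end Aux

/-- if all pairwise block intersections have size `< s`, then
`γ₂(ℬ) ≤ s`. -/
theorem gamma2_le_max_intersection (v k t lam s : ℕ) (hlam : 1 ≤ lam)
    (hs2 : 2 ≤ s) (hsk : s ≤ k)
    (ℬ : Finset (Finset (Fin v))) (hdes : IsDesign ℬ k t lam) (hne : ℬ.Nonempty)
    (hnc : ℬ ≠ Finset.powersetCard k (Finset.univ : Finset (Fin v)))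
    (hint : ∀ B ∈ ℬ, ∀ B' ∈ ℬ, B ≠ B' → (B ∩ B').card < s) :
    gamma2 ℬ ≤ s := by
  classical
  open MvPolynomial Finset in
  obtain ⟨hcard, -⟩ := hdes
  have hsep : ∀ A : Finset (Fin v), A.card = k → A ∉ ℬ →
      ∃ p₀ : MvPolynomial (Fin v) ℂ, p₀.totalDegree ≤ s ∧
        (∀ B ∈ ℬ, eval (charVec B) p₀ = 0) ∧ eval (charVec A) p₀ ≠ 0 :=
    fun A hA hAB => separator hsk (by omega) hcard hint A hA hAB
  choose! p hpdeg hpvan hpnz using hsep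
  set G : Set (MvPolynomial (Fin v) ℂ) :=
    G0 (Fin v) k ∪ {q | ∃ A : Finset (Fin v), A.card = k ∧ A ∉ ℬ ∧ q = p A} with hG
  have hIdef : ∀ f : MvPolynomial (Fin v) ℂ,
      f ∈ designIdeal ℬ ↔ ∀ B ∈ ℬ, eval (charVec B) f = 0 := by
    intro f
    simp [designIdeal, Ideal.mem_iInf, RingHom.mem_ker]
  refine Nat.sInf_le ⟨G, ?_, ?_⟩
  · -- degrees
    rintro g (hg | ⟨A, hA, hAB, rfl⟩)
    · rcases hg with rfl | ⟨i, rfl⟩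
      · refine le_trans (MvPolynomial.totalDegree_sub _ _) ?_
        refine max_le (le_trans (MvPolynomial.totalDegree_finset_sum _ _) ?_) ?_
        · exact Finset.sup_le fun i _ => by simp [MvPolynomial.totalDegree_X]; omega
        · exact le_trans (MvPolynomial.totalDegree_C (k : ℂ)).le (Nat.zero_le s)
      · refine le_trans (MvPolynomial.totalDegree_sub _ _) ?_
        refine max_le ?_ ?_
        · rw [MvPolynomial.totalDegree_X_pow]; omega
        · rw [MvPolynomial.totalDegree_X]; omega
    · exact hpdeg A hA hAB
  · -- span G = designIdeal ℬ
    apply le_antisymm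
    · rw [Ideal.span_le]
      rintro g (hg | ⟨A, hA, hAB, rfl⟩)
      · rw [SetLike.mem_coe, hIdef]
        rcases hg with rfl | ⟨i, rfl⟩
        · intro B hB
          rw [map_sub, eval_C, map_sum]
          simp only [eval_X, charVec]
          rw [Finset.sum_boole]
          have : (Finset.univ.filter fun i => i ∈ B) = B := by
            ext i; simp
          rw [this, hcard B hB, sub_self]
        · intro B hB
          simp only [map_sub, map_pow, eval_X, charVec]
          by_cases h : i ∈ B <;> simp [h]
      · rw [SetLike.mem_coe, hIdef]
        exact hpvan A hA hAB
    · intro f hf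
      rw [hIdef] at hf
      have hboolG : Ideal.span (Set.range fun j : Fin v =>
          (MvPolynomial.X j : MvPolynomial (Fin v) ℂ) ^ 2 - MvPolynomial.X j)
            ≤ Ideal.span G := by
        apply Ideal.span_mono
        intro x hx
        exact Or.inl (Set.mem_insert_of_mem _ hx)
      have hchi : ∀ A : Finset (Fin v), A ∉ ℬ → chi A ∈ Ideal.span G := by
        intro A hAB
        obtain ⟨g, hgG, hgnz⟩ : ∃ g ∈ G, eval (charVec A) g ≠ 0 := by
          by_cases hA : A.card = k
          · exact ⟨p A, Or.inr ⟨A, hA, hAB, rfl⟩, hpnz A hA hAB⟩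
          · refine ⟨(∑ i, MvPolynomial.X i) - MvPolynomial.C (k : ℂ),
              Or.inl (Set.mem_insert _ _), ?_⟩
            rw [map_sub, eval_C, map_sum]
            simp only [eval_X, charVec]
            rw [Finset.sum_boole]
            have h5 : (Finset.univ.filter fun i => i ∈ A) = A := by
              ext i; simp
            rw [h5]
            intro hzero
            rw [sub_eq_zero] at hzero
            exact hA (Nat.cast_injective hzero)
        have hdiff := chiMul A g
        set e := eval (charVec A) g with he
        have h1 : chi A * g ∈ Ideal.span G := Ideal.mul_mem_left _ _ (Ideal.subset_span hgG)
        have h2 : e • chi A ∈ Ideal.span G := by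
          have := Ideal.sub_mem _ h1 (hboolG hdiff)
          simpa using this
        have h3 : chi A = MvPolynomial.C e⁻¹ * (e • chi A) := by
          rw [MvPolynomial.smul_eq_C_mul, ← mul_assoc, ← MvPolynomial.C_mul,
            inv_mul_cancel₀ hgnz, MvPolynomial.C_1, one_mul]
        rw [h3]
        exact Ideal.mul_mem_left _ _ h2
      have hterm : ∀ A : Finset (Fin v), chi A * f ∈ Ideal.span G := by
        intro A
        by_cases hAB : A ∈ ℬ
        · have h4 := chiMul A f
          rw [hf A hAB, zero_smul, sub_zero] at h4
          exact hboolG h4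
        · exact Ideal.mul_mem_right _ _ (hchi A hAB)
      have hsum : f = ∑ A : Finset (Fin v), chi A * f := by
        rw [← Finset.sum_mul, sum_chi, one_mul]
      rw [hsum]
      exact Ideal.sum_mem _ fun A _ => hterm A
end
end
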